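/- For all α ∈ (0,1/2), the function g(α) := 3·h((1/3) ∗ α) − 2 − h(α) is strictly decreasing, with derivative g'(α) = log₂((2α − α²)/(1 − α²)) < 0; moreover g(1/2) = 0, so g(α) ≥ 0 for all α ∈ [0,1/2]. -/

import Mathlib

/-- Binary entropy function (in bits). -/
noncomputable def binEnt (a : ℝ) : ℝ :=
  -(a * Real.logb 2 a) - ((1 - a) * Real.logb 2 (1 - a))

/-- `g(α) := 3·h((1/3) ∗ α) − 2 − h(α)`, where `(1/3) ∗ α = (1+α)/3`. -/
noncomputable def gfun (α : ℝ) : ℝ := 3 * binEnt ((1 + α) / 3) - 2 - binEnt α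

/-!
`binEnt` is Mathlib's `Real.binEntropy` measured in bits, so it inherits continuity and the
derivative `log₂((1 - a)/a)`. By the chain rule, `g'(α) = log₂((2 - α)/(1 + α)) - log₂((1 - α)/α)`,
which is the log of `(2α - α²)/(1 - α²)`; this ratio is `< 1` exactly when `α < 1/2`.
Hence `g` is strictly decreasing on `[0, 1/2]`, and `g(1/2) = 3·1 - 2 - 1 = 0` gives `g ≥ 0`.
-/

open Real Set

lemma binEnt_eq_binEntropy_div (a : ℝ) : binEnt a = binEntropy a / log 2 := by
  simp only [binEnt, binEntropy, logb, log_inv]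
  ring

@[fun_prop]
lemma continuous_binEnt : Continuous binEnt := by
  simp_rw [funext binEnt_eq_binEntropy_div]
  fun_prop

lemma binEnt_two_inv : binEnt 2⁻¹ = 1 := by
  rw [binEnt_eq_binEntropy_div, binEntropy_two_inv, div_self (log_pos one_lt_two).ne']

lemma hasDerivAt_binEnt {a : ℝ} (h₀ : a ≠ 0) (h₁ : a ≠ 1) :
    HasDerivAt binEnt (logb 2 ((1 - a) / a)) a := by
  have h₁' : 1 - a ≠ 0 := sub_ne_zero.mpr h₁.symm
  simp_rw [funext binEnt_eq_binEntropy_div, logb, log_div h₁' h₀]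
  exact (hasDerivAt_binEntropy h₀ h₁).div_const _

lemma hasDerivAt_gfun {α : ℝ} (hα : α ∈ Ioo (0 : ℝ) 1) :
    HasDerivAt gfun (logb 2 ((2 * α - α ^ 2) / (1 - α ^ 2))) α := by
  obtain ⟨h₀, h₁⟩ := hα
  have hshift : (1 - (1 + α) / 3) / ((1 + α) / 3) = (2 - α) / (1 + α) := by
    field_simp
    ring
  have hβ : HasDerivAt binEnt (logb 2 ((2 - α) / (1 + α))) ((1 + α) / 3) :=
    hshift ▸ hasDerivAt_binEnt (by linarith) (by linarith)
  have hg := (((hβ.comp α (((hasDerivAt_id α).const_add 1).div_const 3)).const_mul 3).sub_const 2).sub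
    (hasDerivAt_binEnt h₀.ne' h₁.ne)
  have hratio : (2 * α - α ^ 2) / (1 - α ^ 2) = (2 - α) / (1 + α) / ((1 - α) / α) := by
    have : 1 - α ^ 2 ≠ 0 := by nlinarith
    field_simp
    ring
  rw [hratio, logb_div (div_pos (by linarith) (by linarith)).ne' (div_pos (by linarith) h₀).ne']
  exact hg.congr_deriv (by ring)

lemma logb_two_mul_sub_sq_div_one_sub_sq_neg {α : ℝ} (hα : α ∈ Ioo (0 : ℝ) (1 / 2)) :
    logb 2 ((2 * α - α ^ 2) / (1 - α ^ 2)) < 0 := by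
  obtain ⟨h₀, h₁⟩ := hα
  have hden : 0 < 1 - α ^ 2 := by nlinarith
  refine logb_neg one_lt_two (div_pos (by nlinarith) hden) ?_
  rw [div_lt_one hden]
  linarith

lemma gfun_strictAntiOn : StrictAntiOn gfun (Icc (0 : ℝ) (1 / 2)) := by
  have hcont : Continuous gfun := by
    unfold gfun
    fun_prop
  refine strictAntiOn_of_hasDerivWithinAt_neg (f' := fun α => logb 2 ((2 * α - α ^ 2) / (1 - α ^ 2)))
    (convex_Icc 0 (1 / 2)) hcont.continuousOn
    (fun α hα => ?_) (fun α hα => ?_)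
  · rw [interior_Icc] at hα
    exact (hasDerivAt_gfun (Ioo_subset_Ioo_right (by norm_num) hα)).hasDerivWithinAt
  · rw [interior_Icc] at hα
    exact logb_two_mul_sub_sq_div_one_sub_sq_neg hα

lemma gfun_one_half : gfun (1 / 2) = 0 := by
  rw [gfun, show ((1 : ℝ) + 1 / 2) / 3 = 2⁻¹ by norm_num, one_div, binEnt_two_inv]
  norm_num

theorem gfun_properties :
    (∀ α ∈ Set.Ioo (0:ℝ) (1/2),
      HasDerivAt gfun (Real.logb 2 ((2*α - α^2) / (1 - α^2))) α ∧
      Real.logb 2 ((2*α - α^2) / (1 - α^2)) < 0) ∧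
    StrictAntiOn gfun (Set.Ioo (0:ℝ) (1/2)) ∧
    gfun (1/2) = 0 ∧
    (∀ α ∈ Set.Icc (0:ℝ) (1/2), 0 ≤ gfun α) := by
  refine ⟨fun α hα => ⟨hasDerivAt_gfun (Ioo_subset_Ioo_right (by norm_num) hα),
      logb_two_mul_sub_sq_div_one_sub_sq_neg hα⟩,
    gfun_strictAntiOn.mono Ioo_subset_Icc_self, gfun_one_half, fun α hα => ?_⟩
  rw [← gfun_one_half]
  exact gfun_strictAntiOn.antitoneOn hα (right_mem_Icc.mpr (by norm_num)) hα.2
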